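/- Let H be a bialgebra and A an algebra in ℒℛ(H). Then the L-R-smash product A ♮ H is an H-bicomodule algebra with left coaction λ(a ♮ h) = a^{(-1)}h₁ ⊗ (a^{(0)} ♮ h₂) and right coaction ρ(a ♮ h) = (a^{<0>} ♮ h₁) ⊗ h₂a^{<1>}. -/
import Mathlib
set_option maxHeartbeats 1600000
set_option synthInstance.maxHeartbeats 400000


open TensorProduct

noncomputable section

namespace LR

variable {k : Type*} [Field k]

section Toolbox

variable {X Y Z W X' Y' : Type*}
  [AddCommMonoid X] [Module k X] [AddCommMonoid Y] [Module k Y]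
  [AddCommMonoid Z] [Module k Z] [AddCommMonoid W] [Module k W]
  [AddCommMonoid X'] [Module k X'] [AddCommMonoid Y'] [Module k Y']

/-- Expand the first tensor factor using `f : X →ₗ X' ⊗ Y'`. -/
def expand (f : X →ₗ[k] X' ⊗[k] Y') : X ⊗[k] Z →ₗ[k] X' ⊗[k] (Y' ⊗[k] Z) :=
  (TensorProduct.assoc k X' Y' Z).toLinearMap ∘ₗ (TensorProduct.map f LinearMap.id)

/-- Apply `f` to the first two factors of a right-nested triple tensor. -/
def app2 (f : X ⊗[k] Y →ₗ[k] X' ⊗[k] Y') :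
    X ⊗[k] (Y ⊗[k] Z) →ₗ[k] X' ⊗[k] (Y' ⊗[k] Z) :=
  (TensorProduct.assoc k X' Y' Z).toLinearMap ∘ₗ (TensorProduct.map f LinearMap.id)
    ∘ₗ (TensorProduct.assoc k X Y Z).symm.toLinearMap

/-- Contract the first two factors of a right-nested triple tensor with `m`. -/
def con2 (m : X ⊗[k] Y →ₗ[k] W) : X ⊗[k] (Y ⊗[k] Z) →ₗ[k] W ⊗[k] Z :=
  (TensorProduct.map m LinearMap.id) ∘ₗ (TensorProduct.assoc k X Y Z).symm.toLinearMap

/-- Swap the first two factors of a right-nested triple tensor. -/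
def swL : X ⊗[k] (Y ⊗[k] Z) →ₗ[k] Y ⊗[k] (X ⊗[k] Z) :=
  (TensorProduct.assoc k Y X Z).toLinearMap
    ∘ₗ (TensorProduct.map (TensorProduct.comm k X Y).toLinearMap LinearMap.id)
    ∘ₗ (TensorProduct.assoc k X Y Z).symm.toLinearMap

/-- Exchange the second and third factors of `(X ⊗ Y) ⊗ Z`. -/
def ex23 : (X ⊗[k] Y) ⊗[k] Z →ₗ[k] (X ⊗[k] Z) ⊗[k] Y :=
  (TensorProduct.assoc k X Z Y).symm.toLinearMap
    ∘ₗ (TensorProduct.map LinearMap.id (TensorProduct.comm k Y Z).toLinearMap)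
    ∘ₗ (TensorProduct.assoc k X Y Z).toLinearMap

/-- The componentwise multiplication on a tensor product of two
(not necessarily unital) multiplications. -/
def tensMul (m₁ : X ⊗[k] X →ₗ[k] X) (m₂ : Y ⊗[k] Y →ₗ[k] Y) :
    (X ⊗[k] Y) ⊗[k] (X ⊗[k] Y) →ₗ[k] X ⊗[k] Y :=
  (TensorProduct.map m₁ m₂) ∘ₗ (tensorTensorTensorComm k X Y X Y).toLinearMap

end Toolbox

section LRPair

variable {A B : Type*} [AddCommMonoid A] [Module k A] [AddCommMonoid B] [Module k B]

/-- `x ⊗ y ↦ Σ x·a'_S ⊗ y_S` where `S(y ⊗ a') = a'_S ⊗ y_S`. -/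
def rext (mA : A ⊗[k] A →ₗ[k] A) (S : B ⊗[k] A →ₗ[k] A ⊗[k] B) (a' : A) :
    A ⊗[k] B →ₗ[k] A ⊗[k] B :=
  (TensorProduct.map mA LinearMap.id)
    ∘ₗ (TensorProduct.assoc k A A B).symm.toLinearMap
    ∘ₗ (TensorProduct.map LinearMap.id (S ∘ₗ (TensorProduct.mk k B A).flip a'))

/-- `x ⊗ y ↦ Σ x_S ⊗ b_S · y` where `S(b ⊗ x) = x_S ⊗ b_S`. -/
def lext (mB : B ⊗[k] B →ₗ[k] B) (S : B ⊗[k] A →ₗ[k] A ⊗[k] B) (b : B) :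
    A ⊗[k] B →ₗ[k] A ⊗[k] B :=
  (TensorProduct.map LinearMap.id mB)
    ∘ₗ (TensorProduct.assoc k A B B).toLinearMap
    ∘ₗ (TensorProduct.map (S ∘ₗ (TensorProduct.mk k B A) b) LinearMap.id)

/-- `x ⊗ y ↦ Σ a_S · x ⊗ y_S` where `S(a ⊗ y) = a_S ⊗ y_S`. -/
def qlext (mA : A ⊗[k] A →ₗ[k] A) (S : A ⊗[k] B →ₗ[k] A ⊗[k] B) (a : A) :
    A ⊗[k] B →ₗ[k] A ⊗[k] B :=
  (TensorProduct.map (mA ∘ₗ (TensorProduct.comm k A A).toLinearMap) LinearMap.id)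
    ∘ₗ (TensorProduct.assoc k A A B).symm.toLinearMap
    ∘ₗ (TensorProduct.map LinearMap.id (S ∘ₗ (TensorProduct.mk k A B) a))

/-- `x ⊗ y ↦ Σ x_S ⊗ y · b'_S` where `S(x ⊗ b') = x_S ⊗ b'_S`. -/
def qrext (mB : B ⊗[k] B →ₗ[k] B) (S : A ⊗[k] B →ₗ[k] A ⊗[k] B) (b' : B) :
    A ⊗[k] B →ₗ[k] A ⊗[k] B :=
  (TensorProduct.map LinearMap.id (mB ∘ₗ (TensorProduct.comm k B B).toLinearMap))
    ∘ₗ (TensorProduct.assoc k A B B).toLinearMap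
    ∘ₗ (TensorProduct.map (S ∘ₗ (TensorProduct.mk k A B).flip b') LinearMap.id)

/-- `x ⊗ y ↦ Σ y ⊗ S(x ⊗ b')`. -/
def swQ (S : A ⊗[k] B →ₗ[k] A ⊗[k] B) (b' : B) :
    A ⊗[k] B →ₗ[k] B ⊗[k] (A ⊗[k] B) :=
  (TensorProduct.map LinearMap.id S)
    ∘ₗ (TensorProduct.map LinearMap.id ((TensorProduct.mk k A B).flip b'))
    ∘ₗ (TensorProduct.comm k A B).toLinearMap

/-- `x ⊗ y ↦ Σ v ⊗ (u ⊗ y)` where `S(b ⊗ x) = u ⊗ v`. -/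
def swR (S : B ⊗[k] A →ₗ[k] A ⊗[k] B) (b : B) :
    A ⊗[k] B →ₗ[k] B ⊗[k] (A ⊗[k] B) :=
  (TensorProduct.assoc k B A B).toLinearMap
    ∘ₗ (TensorProduct.map (TensorProduct.comm k A B).toLinearMap LinearMap.id)
    ∘ₗ (TensorProduct.map (S ∘ₗ (TensorProduct.mk k B A) b) LinearMap.id)

/-- `x ⊗ y ↦ Σ x ⊗ (v ⊗ u)` where `S(a' ⊗ y) = u ⊗ v`. -/
def swQ2 (S : A ⊗[k] B →ₗ[k] A ⊗[k] B) (a' : A) :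
    A ⊗[k] B →ₗ[k] A ⊗[k] (B ⊗[k] A) :=
  TensorProduct.map LinearMap.id
    ((TensorProduct.comm k A B).toLinearMap ∘ₗ S ∘ₗ (TensorProduct.mk k A B) a')

/-- `x ⊗ y ↦ Σ u ⊗ (v ⊗ x)` where `S(y ⊗ a) = u ⊗ v`. -/
def swR2 (S : B ⊗[k] A →ₗ[k] A ⊗[k] B) (a : A) :
    A ⊗[k] B →ₗ[k] A ⊗[k] (B ⊗[k] A) :=
  (TensorProduct.assoc k A B A).toLinearMap
    ∘ₗ (TensorProduct.map (S ∘ₗ (TensorProduct.mk k B A).flip a) LinearMap.id)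
    ∘ₗ (TensorProduct.comm k A B).toLinearMap

/-- `(a ⊗ b) ⊗ (a' ⊗ b') ↦ (a ⊗ b') ⊗ (b ⊗ a')`. -/
def lrRearr : (A ⊗[k] B) ⊗[k] (A ⊗[k] B) →ₗ[k] (A ⊗[k] B) ⊗[k] (B ⊗[k] A) :=
  (tensorTensorTensorComm k A B B A).toLinearMap
    ∘ₗ (TensorProduct.map LinearMap.id (TensorProduct.comm k A B).toLinearMap)

/-- The multiplication of the L-R-twisted tensor product:
`(a ⊗ b)(a' ⊗ b') = a_Q a'_R ⊗ b_R b'_Q`. -/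
def lrMulGen (mA : A ⊗[k] A →ₗ[k] A) (mB : B ⊗[k] B →ₗ[k] B)
    (Q : A ⊗[k] B →ₗ[k] A ⊗[k] B) (R : B ⊗[k] A →ₗ[k] A ⊗[k] B) :
    (A ⊗[k] B) ⊗[k] (A ⊗[k] B) →ₗ[k] A ⊗[k] B :=
  (TensorProduct.map mA (mB ∘ₗ (TensorProduct.comm k B B).toLinearMap))
    ∘ₗ (tensorTensorTensorComm k A B A B).toLinearMap
    ∘ₗ (TensorProduct.map Q R) ∘ₗ lrRearr

/-- `R : B ⊗ A → A ⊗ B` is a twisting map (w.r.t. the given multiplications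
and units). -/
def IsTwistingMap (mA : A ⊗[k] A →ₗ[k] A) (mB : B ⊗[k] B →ₗ[k] B)
    (oneA : A) (oneB : B) (R : B ⊗[k] A →ₗ[k] A ⊗[k] B) : Prop :=
  (∀ a : A, R (oneB ⊗ₜ a) = a ⊗ₜ oneB) ∧
  (∀ b : B, R (b ⊗ₜ oneA) = oneA ⊗ₜ b) ∧
  (∀ (a a' : A) (b : B), R (b ⊗ₜ mA (a ⊗ₜ a')) = rext mA R a' (R (b ⊗ₜ a))) ∧
  (∀ (a : A) (b b' : B), R (mB (b ⊗ₜ b') ⊗ₜ a) = lext mB R b (R (b' ⊗ₜ a)))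

/-- The axioms of an L-R-twisted tensor product `A _Q⊗_R B`. -/
def IsLRPair (mA : A ⊗[k] A →ₗ[k] A) (mB : B ⊗[k] B →ₗ[k] B)
    (oneA : A) (oneB : B)
    (Q : A ⊗[k] B →ₗ[k] A ⊗[k] B) (R : B ⊗[k] A →ₗ[k] A ⊗[k] B) : Prop :=
  IsTwistingMap mA mB oneA oneB R ∧
  (∀ a : A, Q (a ⊗ₜ oneB) = a ⊗ₜ oneB) ∧
  (∀ b : B, Q (oneA ⊗ₜ b) = oneA ⊗ₜ b) ∧
  (∀ (a a' : A) (b : B), Q (mA (a ⊗ₜ a') ⊗ₜ b) = qlext mA Q a (Q (a' ⊗ₜ b))) ∧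
  (∀ (a : A) (b b' : B), Q (a ⊗ₜ mB (b ⊗ₜ b')) = qrext mB Q b' (Q (a ⊗ₜ b))) ∧
  (∀ (a : A) (b b' : B), swQ Q b' (R (b ⊗ₜ a)) = swR R b (Q (a ⊗ₜ b'))) ∧
  (∀ (a a' : A) (b : B), swQ2 Q a' (R (b ⊗ₜ a)) = swR2 R a (Q (a' ⊗ₜ b)))

end LRPair

end LR

namespace LR

section Bialg

variable {k : Type*} [Field k]
variable {H : Type*} [Ring H] [Bialgebra k H]
variable {M : Type*} [AddCommMonoid M] [Module k M]

/-- `(M, mM, oneM)` together with the two actions `la`, `ra` is an `H`-bimodule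
algebra. -/
def IsBimoduleAlgebra (mM : M ⊗[k] M →ₗ[k] M) (oneM : M)
    (la : H ⊗[k] M →ₗ[k] M) (ra : M ⊗[k] H →ₗ[k] M) : Prop :=
  (∀ m : M, la ((1 : H) ⊗ₜ m) = m) ∧
  (∀ (g h : H) (m : M), la ((g * h) ⊗ₜ m) = la (g ⊗ₜ la (h ⊗ₜ m))) ∧
  (∀ m : M, ra (m ⊗ₜ (1 : H)) = m) ∧
  (∀ (m : M) (g h : H), ra (m ⊗ₜ (g * h)) = ra (ra (m ⊗ₜ g) ⊗ₜ h)) ∧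
  (∀ (h : H) (m : M) (g : H), ra (la (h ⊗ₜ m) ⊗ₜ g) = la (h ⊗ₜ ra (m ⊗ₜ g))) ∧
  (∀ (h : H) (x y : M),
    la (h ⊗ₜ mM (x ⊗ₜ y)) =
      (mM ∘ₗ TensorProduct.map (la ∘ₗ (TensorProduct.mk k H M).flip x)
        (la ∘ₗ (TensorProduct.mk k H M).flip y)) (Coalgebra.comul (R := k) h)) ∧
  (∀ h : H, la (h ⊗ₜ oneM) = Coalgebra.counit (R := k) h • oneM) ∧
  (∀ (h : H) (x y : M),
    ra (mM (x ⊗ₜ y) ⊗ₜ h) =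
      (mM ∘ₗ TensorProduct.map (ra ∘ₗ (TensorProduct.mk k M H) x)
        (ra ∘ₗ (TensorProduct.mk k M H) y)) (Coalgebra.comul (R := k) h)) ∧
  (∀ h : H, ra (oneM ⊗ₜ h) = Coalgebra.counit (R := k) h • oneM)

/-- `(M, mM, oneM)` together with the two coactions `ρl`, `ρr` is an `H`-bicomodule
algebra. -/
def IsBicomoduleAlgebra (mM : M ⊗[k] M →ₗ[k] M) (oneM : M)
    (ρl : M →ₗ[k] H ⊗[k] M) (ρr : M →ₗ[k] M ⊗[k] H) : Prop :=
  (∀ m : M, (TensorProduct.lid k M)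
      ((TensorProduct.map (Coalgebra.counit (R := k)) LinearMap.id) (ρl m)) = m) ∧
  (∀ m : M, (TensorProduct.map (Coalgebra.comul (R := k)) LinearMap.id) (ρl m) =
      (TensorProduct.assoc k H H M).symm
        ((TensorProduct.map LinearMap.id ρl) (ρl m))) ∧
  (∀ m : M, (TensorProduct.rid k M)
      ((TensorProduct.map LinearMap.id (Coalgebra.counit (R := k))) (ρr m)) = m) ∧
  (∀ m : M, (TensorProduct.map LinearMap.id (Coalgebra.comul (R := k))) (ρr m) =
      (TensorProduct.assoc k M H H)
        ((TensorProduct.map ρr LinearMap.id) (ρr m))) ∧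
  (∀ m : M, (TensorProduct.map LinearMap.id ρr) (ρl m) =
      (TensorProduct.assoc k H M H)
        ((TensorProduct.map ρl LinearMap.id) (ρr m))) ∧
  (ρl oneM = (1 : H) ⊗ₜ oneM) ∧
  (∀ x y : M, ρl (mM (x ⊗ₜ y)) =
      tensMul (LinearMap.mul' k H) mM (ρl x ⊗ₜ ρl y)) ∧
  (ρr oneM = oneM ⊗ₜ (1 : H)) ∧
  (∀ x y : M, ρr (mM (x ⊗ₜ y)) =
      tensMul mM (LinearMap.mul' k H) (ρr x ⊗ₜ ρr y))

variable {P : Type*} [AddCommMonoid P] [Module k P]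

/-- `R(u ⊗ φ) = u_{[-1]}·φ ⊗ u_{[0]}` built from a left coaction on `P` and a left
action on `M`. -/
def smashR (la : H ⊗[k] M →ₗ[k] M) (ρl : P →ₗ[k] H ⊗[k] P) :
    P ⊗[k] M →ₗ[k] M ⊗[k] P :=
  (TensorProduct.map la LinearMap.id) ∘ₗ ex23 ∘ₗ (TensorProduct.map ρl LinearMap.id)

/-- `Q(φ ⊗ u) = φ·u_{<1>} ⊗ u_{<0>}` built from a right coaction on `P` and a right
action on `M`. -/
def smashQ (ra : M ⊗[k] H →ₗ[k] M) (ρr : P →ₗ[k] P ⊗[k] H) :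
    M ⊗[k] P →ₗ[k] M ⊗[k] P :=
  (TensorProduct.map ra LinearMap.id)
    ∘ₗ (TensorProduct.assoc k M H P).symm.toLinearMap
    ∘ₗ (TensorProduct.map LinearMap.id
        ((TensorProduct.comm k P H).toLinearMap ∘ₗ ρr))

/-- `R(h ⊗ m) = δ(h)₁ · m ⊗ δ(h)₂` (the smash-product twisting map associated to a
comultiplication-like map `δ`). -/
def RsmashGen (la : H ⊗[k] M →ₗ[k] M) (δ : H →ₗ[k] H ⊗[k] H) :
    H ⊗[k] M →ₗ[k] M ⊗[k] H :=
  (TensorProduct.map la LinearMap.id) ∘ₗ ex23 ∘ₗ (TensorProduct.map δ LinearMap.id)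

/-- `Q(m ⊗ h) = m · δ(h)₂ ⊗ δ(h)₁`. -/
def QsmashGen (ra : M ⊗[k] H →ₗ[k] M) (δ : H →ₗ[k] H ⊗[k] H) :
    M ⊗[k] H →ₗ[k] M ⊗[k] H :=
  (TensorProduct.map ra LinearMap.id)
    ∘ₗ (TensorProduct.assoc k M H H).symm.toLinearMap
    ∘ₗ (TensorProduct.map LinearMap.id ((TensorProduct.comm k H H).toLinearMap ∘ₗ δ))

end Bialg

end LR

namespace LR

section YDL

variable {k : Type*} [Field k]
variable {H : Type*} [Ring H] [Bialgebra k H]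
variable {A : Type*} [Ring A] [Algebra k A]
variable {𝒜 : Type*} [Ring 𝒜] [Algebra k 𝒜]

/-- `A` is an algebra in the category `ℒℛ(H)` of Yetter-Drinfeld-Long bimodules:
it is an `H`-bimodule algebra and an `H`-bicomodule algebra, and the four
Yetter-Drinfeld/Long compatibility conditions hold. -/
def IsYDLAlgebra (la : H ⊗[k] A →ₗ[k] A) (ra : A ⊗[k] H →ₗ[k] A)
    (ρl : A →ₗ[k] H ⊗[k] A) (ρr : A →ₗ[k] A ⊗[k] H) : Prop :=
  IsBimoduleAlgebra (LinearMap.mul' k A) (1 : A) la ra ∧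
  IsBicomoduleAlgebra (LinearMap.mul' k A) (1 : A) ρl ρr ∧
  -- left-left Yetter-Drinfeld
  (∀ (h : H) (m : A),
    (TensorProduct.map (LinearMap.mul' k H) LinearMap.id)
        (ex23 ((TensorProduct.map (ρl ∘ₗ la ∘ₗ (TensorProduct.mk k H A).flip m)
          LinearMap.id) (Coalgebra.comul (R := k) h))) =
      (TensorProduct.map (LinearMap.mul' k H) la)
        ((tensorTensorTensorComm k H H H A)
          ((Coalgebra.comul (R := k) h) ⊗ₜ[k] (ρl m)))) ∧
  -- left-right Long
  (∀ (h : H) (m : A),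
    ρr (la (h ⊗ₜ m)) =
      (TensorProduct.map (la ∘ₗ (TensorProduct.mk k H A) h) LinearMap.id) (ρr m)) ∧
  -- right-right Yetter-Drinfeld
  (∀ (h : H) (m : A),
    (TensorProduct.comm k H A)
        ((TensorProduct.map (LinearMap.mul' k H) LinearMap.id)
          ((TensorProduct.assoc k H H A).symm
            ((TensorProduct.map LinearMap.id
                ((TensorProduct.comm k A H).toLinearMap ∘ₗ ρr ∘ₗ ra
                  ∘ₗ (TensorProduct.mk k A H) m))
              (Coalgebra.comul (R := k) h)))) =
      (TensorProduct.map ra (LinearMap.mul' k H))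
        ((tensorTensorTensorComm k A H H H)
          ((ρr m) ⊗ₜ[k] (Coalgebra.comul (R := k) h)))) ∧
  -- right-left Long
  (∀ (m : A) (h : H),
    ρl (ra (m ⊗ₜ h)) =
      (TensorProduct.map LinearMap.id (ra ∘ₗ (TensorProduct.mk k A H).flip h)) (ρl m))

/-- the left `H`-action `h·(φ ♮ a) = h₁·φ ♮ h₂·a` on `𝒜 ⊗ A`. -/
def Lact (la𝒜 : H ⊗[k] 𝒜 →ₗ[k] 𝒜) (laA : H ⊗[k] A →ₗ[k] A) :
    H ⊗[k] (𝒜 ⊗[k] A) →ₗ[k] 𝒜 ⊗[k] A :=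
  (TensorProduct.map la𝒜 laA) ∘ₗ (tensorTensorTensorComm k H H 𝒜 A).toLinearMap
    ∘ₗ (TensorProduct.map (Coalgebra.comul (R := k)) LinearMap.id)

/-- the right `H`-action `(φ ♮ a)·h = φ·h₂ ♮ a·h₁` on `𝒜 ⊗ A`. -/
def Ract (ra𝒜 : 𝒜 ⊗[k] H →ₗ[k] 𝒜) (raA : A ⊗[k] H →ₗ[k] A) :
    (𝒜 ⊗[k] A) ⊗[k] H →ₗ[k] 𝒜 ⊗[k] A :=
  (TensorProduct.map ra𝒜 raA) ∘ₗ (tensorTensorTensorComm k 𝒜 A H H).toLinearMap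
    ∘ₗ (TensorProduct.map LinearMap.id
        ((TensorProduct.comm k H H).toLinearMap ∘ₗ (Coalgebra.comul (R := k))))

/-- the left `H`-coaction `λ(a ♮ h) = a^{(-1)}h₁ ⊗ (a^{(0)} ♮ h₂)` on `A ⊗ H`. -/
def lamAH (ρlA : A →ₗ[k] H ⊗[k] A) : A ⊗[k] H →ₗ[k] H ⊗[k] (A ⊗[k] H) :=
  (TensorProduct.map (LinearMap.mul' k H) LinearMap.id)
    ∘ₗ (tensorTensorTensorComm k H A H H).toLinearMap
    ∘ₗ (TensorProduct.map ρlA (Coalgebra.comul (R := k)))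

/-- the right `H`-coaction `ρ(a ♮ h) = (a^{<0>} ♮ h₁) ⊗ h₂a^{<1>}` on `A ⊗ H`. -/
def rhoAH (ρrA : A →ₗ[k] A ⊗[k] H) : A ⊗[k] H →ₗ[k] (A ⊗[k] H) ⊗[k] H :=
  (TensorProduct.map LinearMap.id
      ((LinearMap.mul' k H) ∘ₗ (TensorProduct.comm k H H).toLinearMap))
    ∘ₗ (tensorTensorTensorComm k A H H H).toLinearMap
    ∘ₗ (TensorProduct.map ρrA (Coalgebra.comul (R := k)))

end YDL

end LR

namespace LR
section Aux
noncomputable section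
set_option maxHeartbeats 1600000
set_option synthInstance.maxHeartbeats 400000
variable {k : Type*} [Field k] {H A : Type*} [Ring H] [Bialgebra k H] [Ring A] [Algebra k A]

/-- core of the left coaction -/
def Lc : (H ⊗[k] A) ⊗[k] (H ⊗[k] H) →ₗ[k] H ⊗[k] (A ⊗[k] H) :=
  (TensorProduct.map (LinearMap.mul' k H) LinearMap.id)
    ∘ₗ (tensorTensorTensorComm k H A H H).toLinearMap

/-- core of the right coaction -/
def Rc : (A ⊗[k] H) ⊗[k] (H ⊗[k] H) →ₗ[k] (A ⊗[k] H) ⊗[k] H :=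
  (TensorProduct.map LinearMap.id
      ((LinearMap.mul' k H) ∘ₗ (TensorProduct.comm k H H).toLinearMap))
    ∘ₗ (tensorTensorTensorComm k A H H H).toLinearMap

@[simp] lemma Lc_tmul (u : H) (v : A) (p q : H) :
    Lc ((u ⊗ₜ[k] v) ⊗ₜ (p ⊗ₜ[k] q)) = (u * p) ⊗ₜ[k] (v ⊗ₜ[k] q) := by
  simp [Lc]

@[simp] lemma Rc_tmul (v : A) (c : H) (p q : H) :
    Rc ((v ⊗ₜ[k] c) ⊗ₜ (p ⊗ₜ[k] q)) = (v ⊗ₜ[k] p) ⊗ₜ[k] (q * c) := by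
  simp [Rc]

section WithMaps

variable (ρl : A →ₗ[k] H ⊗[k] A) (ρr : A →ₗ[k] A ⊗[k] H)

lemma lamAH_apply (a : A) (h : H) :
    lamAH ρl (a ⊗ₜ[k] h) = Lc (ρl a ⊗ₜ[k] Coalgebra.comul (R := k) h) := by
  simp [lamAH, Lc]

lemma rhoAH_apply (a : A) (h : H) :
    rhoAH ρr (a ⊗ₜ[k] h) = Rc (ρr a ⊗ₜ[k] Coalgebra.comul (R := k) h) := by
  simp [rhoAH, Rc]

end WithMaps

lemma counit_rid (h : H) :
    TensorProduct.lid k H ((TensorProduct.map (Coalgebra.counit (R:=k)) LinearMap.id)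
      (Coalgebra.comul (R:=k) h)) = h := by
  have := Coalgebra.rTensor_counit_comul (R:=k) h
  rw [LinearMap.rTensor] at this
  rw [this]; simp

lemma counit_lid (h : H) :
    TensorProduct.rid k H ((TensorProduct.map LinearMap.id (Coalgebra.counit (R:=k)))
      (Coalgebra.comul (R:=k) h)) = h := by
  have := Coalgebra.lTensor_counit_comul (R:=k) h
  rw [LinearMap.lTensor] at this
  rw [this]; simp

/-- `(Δ ⊗ id) ∘ Δ = assoc⁻¹ ∘ (id ⊗ Δ) ∘ Δ`. -/
lemma coassocL (h : H) :
    (TensorProduct.map (Coalgebra.comul (R:=k)) LinearMap.id) (Coalgebra.comul (R:=k) h) =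
      (TensorProduct.assoc k H H H).symm
        ((TensorProduct.map LinearMap.id (Coalgebra.comul (R:=k))) (Coalgebra.comul h)) := by
  have := Coalgebra.coassoc_symm_apply (R:=k) h
  rw [LinearMap.rTensor, LinearMap.lTensor] at this
  exact this.symm

/-- `(id ⊗ Δ) ∘ Δ = assoc ∘ (Δ ⊗ id) ∘ Δ`. -/
lemma coassocR (h : H) :
    (TensorProduct.map LinearMap.id (Coalgebra.comul (R:=k))) (Coalgebra.comul (R:=k) h) =
      (TensorProduct.assoc k H H H)
        ((TensorProduct.map (Coalgebra.comul (R:=k)) LinearMap.id) (Coalgebra.comul h)) := by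
  have := Coalgebra.coassoc_apply (R:=k) h
  rw [LinearMap.rTensor, LinearMap.lTensor] at this
  exact this.symm

lemma counit_Lc (x : H ⊗[k] A) (y : H ⊗[k] H) :
    TensorProduct.lid k (A ⊗[k] H)
      ((TensorProduct.map (Coalgebra.counit (R:=k)) LinearMap.id) (Lc (x ⊗ₜ y))) =
    (TensorProduct.lid k A ((TensorProduct.map (Coalgebra.counit (R:=k)) LinearMap.id) x)) ⊗ₜ
    (TensorProduct.lid k H ((TensorProduct.map (Coalgebra.counit (R:=k)) LinearMap.id) y)) := by
  induction x using TensorProduct.induction_on with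
  | zero => simp
  | tmul u v =>
    induction y using TensorProduct.induction_on with
    | zero => simp
    | tmul p q => simp [smul_tmul', smul_smul, mul_comm]
    | add y1 y2 h1 h2 => simp only [tmul_add, map_add, h1, h2, add_tmul, tmul_add]
  | add x1 x2 h1 h2 => simp only [add_tmul, map_add, h1, h2, tmul_add]

lemma counit_Rc (x : A ⊗[k] H) (y : H ⊗[k] H) :
    TensorProduct.rid k (A ⊗[k] H)
      ((TensorProduct.map LinearMap.id (Coalgebra.counit (R:=k))) (Rc (x ⊗ₜ y))) =
    (TensorProduct.rid k A ((TensorProduct.map LinearMap.id (Coalgebra.counit (R:=k))) x)) ⊗ₜ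
    (TensorProduct.rid k H ((TensorProduct.map LinearMap.id (Coalgebra.counit (R:=k))) y)) := by
  induction x using TensorProduct.induction_on with
  | zero => simp
  | tmul v c =>
    induction y using TensorProduct.induction_on with
    | zero => simp
    | tmul p q => simp [smul_tmul', smul_smul, tmul_smul, mul_comm]
    | add y1 y2 h1 h2 => simp only [tmul_add, map_add, h1, h2, add_tmul, tmul_add]
  | add x1 x2 h1 h2 => simp only [add_tmul, map_add, h1, h2, tmul_add]

/-- common middle for the left coassociativity -/
def F1 : ((H ⊗[k] H) ⊗[k] A) ⊗[k] ((H ⊗[k] H) ⊗[k] H) →ₗ[k] (H ⊗[k] H) ⊗[k] (A ⊗[k] H) :=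
  (TensorProduct.map (LinearMap.mul' k (H ⊗[k] H)) LinearMap.id)
    ∘ₗ (tensorTensorTensorComm k (H ⊗[k] H) A (H ⊗[k] H) H).toLinearMap

@[simp] lemma F1_tmul (Z : H ⊗[k] H) (v : A) (W : H ⊗[k] H) (q : H) :
    F1 ((Z ⊗ₜ v) ⊗ₜ (W ⊗ₜ q)) = (Z * W) ⊗ₜ[k] (v ⊗ₜ[k] q) := by
  simp [F1]

lemma S1L (x : H ⊗[k] A) (y : H ⊗[k] H) :
    (TensorProduct.map (Coalgebra.comul (R:=k)) LinearMap.id) (Lc (x ⊗ₜ y)) =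
      F1 ((TensorProduct.map (Coalgebra.comul (R:=k)) LinearMap.id) x ⊗ₜ
          (TensorProduct.map (Coalgebra.comul (R:=k)) LinearMap.id) y) := by
  induction x using TensorProduct.induction_on with
  | zero => simp
  | tmul u v =>
    induction y using TensorProduct.induction_on with
    | zero => simp
    | tmul p q => simp
    | add y1 y2 h1 h2 => simp only [tmul_add, map_add, h1, h2, add_tmul]
  | add x1 x2 h1 h2 => simp only [add_tmul, map_add, h1, h2, tmul_add]

lemma S2L' (u p : H) (w : H ⊗[k] A) (z : H ⊗[k] H) :
    (TensorProduct.assoc k H H (A ⊗[k] H)).symm ((u * p) ⊗ₜ Lc (w ⊗ₜ z)) =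
      F1 ((TensorProduct.assoc k H H A).symm (u ⊗ₜ w) ⊗ₜ
          (TensorProduct.assoc k H H H).symm (p ⊗ₜ z)) := by
  induction w using TensorProduct.induction_on with
  | zero => simp
  | tmul u' v' =>
    induction z using TensorProduct.induction_on with
    | zero => simp
    | tmul p' q' => simp
    | add y1 y2 h1 h2 => simp only [tmul_add, map_add, h1, h2, add_tmul]
  | add x1 x2 h1 h2 => simp only [add_tmul, map_add, h1, h2, tmul_add]

lemma S2L (ρl : A →ₗ[k] H ⊗[k] A) (x : H ⊗[k] A) (y : H ⊗[k] H) :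
    (TensorProduct.assoc k H H (A ⊗[k] H)).symm
        ((TensorProduct.map LinearMap.id (lamAH ρl)) (Lc (x ⊗ₜ y))) =
      F1 ((TensorProduct.assoc k H H A).symm ((TensorProduct.map LinearMap.id ρl) x) ⊗ₜ
          (TensorProduct.assoc k H H H).symm
            ((TensorProduct.map LinearMap.id (Coalgebra.comul (R:=k))) y)) := by
  induction x using TensorProduct.induction_on with
  | zero => simp
  | tmul u v =>
    induction y using TensorProduct.induction_on with
    | zero => simp
    | tmul p q =>
      simp only [Lc_tmul, TensorProduct.map_tmul, LinearMap.id_coe, id_eq, lamAH_apply]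
      exact S2L' u p (ρl v) (Coalgebra.comul q)
    | add y1 y2 h1 h2 => simp only [tmul_add, map_add, h1, h2, add_tmul]
  | add x1 x2 h1 h2 => simp only [add_tmul, map_add, h1, h2, tmul_add]

/-- common middle for the right coassociativity -/
def G1 : (A ⊗[k] (H ⊗[k] H)) ⊗[k] (H ⊗[k] (H ⊗[k] H)) →ₗ[k] (A ⊗[k] H) ⊗[k] (H ⊗[k] H) :=
  (TensorProduct.map LinearMap.id
      ((LinearMap.mul' k (H ⊗[k] H)) ∘ₗ (TensorProduct.comm k (H ⊗[k] H) (H ⊗[k] H)).toLinearMap))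
    ∘ₗ (tensorTensorTensorComm k A (H ⊗[k] H) H (H ⊗[k] H)).toLinearMap

@[simp] lemma G1_tmul (v : A) (Z : H ⊗[k] H) (p : H) (W : H ⊗[k] H) :
    G1 ((v ⊗ₜ Z) ⊗ₜ (p ⊗ₜ W)) = (v ⊗ₜ[k] p) ⊗ₜ[k] (W * Z) := by
  simp [G1]

lemma S1R (x : A ⊗[k] H) (y : H ⊗[k] H) :
    (TensorProduct.map LinearMap.id (Coalgebra.comul (R:=k))) (Rc (x ⊗ₜ y)) =
      G1 ((TensorProduct.map LinearMap.id (Coalgebra.comul (R:=k))) x ⊗ₜ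
          (TensorProduct.map LinearMap.id (Coalgebra.comul (R:=k))) y) := by
  induction x using TensorProduct.induction_on with
  | zero => simp
  | tmul v c =>
    induction y using TensorProduct.induction_on with
    | zero => simp
    | tmul p q => simp
    | add y1 y2 h1 h2 => simp only [tmul_add, map_add, h1, h2, add_tmul]
  | add x1 x2 h1 h2 => simp only [add_tmul, map_add, h1, h2, tmul_add]

lemma S2R' (c q : H) (w : A ⊗[k] H) (z : H ⊗[k] H) :
    (TensorProduct.assoc k (A ⊗[k] H) H H) (Rc (w ⊗ₜ z) ⊗ₜ (q * c)) =
      G1 ((TensorProduct.assoc k A H H) (w ⊗ₜ c) ⊗ₜ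
          (TensorProduct.assoc k H H H) (z ⊗ₜ q)) := by
  induction w using TensorProduct.induction_on with
  | zero => simp
  | tmul v γ =>
    induction z using TensorProduct.induction_on with
    | zero => simp
    | tmul p d => simp
    | add y1 y2 h1 h2 => simp only [tmul_add, map_add, h1, h2, add_tmul]
  | add x1 x2 h1 h2 => simp only [add_tmul, map_add, h1, h2, tmul_add]

lemma S2R (ρr : A →ₗ[k] A ⊗[k] H) (x : A ⊗[k] H) (y : H ⊗[k] H) :
    (TensorProduct.assoc k (A ⊗[k] H) H H)
        ((TensorProduct.map (rhoAH ρr) LinearMap.id) (Rc (x ⊗ₜ y))) =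
      G1 ((TensorProduct.assoc k A H H) ((TensorProduct.map ρr LinearMap.id) x) ⊗ₜ
          (TensorProduct.assoc k H H H)
            ((TensorProduct.map (Coalgebra.comul (R:=k)) LinearMap.id) y)) := by
  induction x using TensorProduct.induction_on with
  | zero => simp
  | tmul v c =>
    induction y using TensorProduct.induction_on with
    | zero => simp
    | tmul p q =>
      simp only [Rc_tmul, TensorProduct.map_tmul, LinearMap.id_coe, id_eq, rhoAH_apply]
      exact S2R' c q (ρr v) (Coalgebra.comul p)
    | add y1 y2 h1 h2 => simp only [tmul_add, map_add, h1, h2, add_tmul]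
  | add x1 x2 h1 h2 => simp only [add_tmul, map_add, h1, h2, tmul_add]

/-- gadgets for the bicomodule compatibility -/
def K1 : (H ⊗[k] (A ⊗[k] H)) ⊗[k] (H ⊗[k] (H ⊗[k] H)) →ₗ[k] H ⊗[k] ((A ⊗[k] H) ⊗[k] H) :=
  (TensorProduct.map (LinearMap.mul' k H) Rc)
    ∘ₗ (tensorTensorTensorComm k H (A ⊗[k] H) H (H ⊗[k] H)).toLinearMap

@[simp] lemma K1_tmul (u : H) (w : A ⊗[k] H) (p : H) (z : H ⊗[k] H) :
    K1 ((u ⊗ₜ w) ⊗ₜ (p ⊗ₜ z)) = (u * p) ⊗ₜ[k] Rc (w ⊗ₜ z) := by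
  simp [K1]

def K2 : ((H ⊗[k] A) ⊗[k] H) ⊗[k] ((H ⊗[k] H) ⊗[k] H) →ₗ[k] H ⊗[k] ((A ⊗[k] H) ⊗[k] H) :=
  (TensorProduct.assoc k H (A ⊗[k] H) H).toLinearMap
    ∘ₗ (TensorProduct.map Lc ((LinearMap.mul' k H) ∘ₗ (TensorProduct.comm k H H).toLinearMap))
    ∘ₗ (tensorTensorTensorComm k (H ⊗[k] A) H (H ⊗[k] H) H).toLinearMap

@[simp] lemma K2_tmul (w : H ⊗[k] A) (c : H) (z : H ⊗[k] H) (q : H) :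
    K2 ((w ⊗ₜ c) ⊗ₜ (z ⊗ₜ q)) =
      (TensorProduct.assoc k H (A ⊗[k] H) H) (Lc (w ⊗ₜ z) ⊗ₜ (q * c)) := by
  simp [K2]

lemma S5a (ρr : A →ₗ[k] A ⊗[k] H) (x : H ⊗[k] A) (y : H ⊗[k] H) :
    (TensorProduct.map LinearMap.id (rhoAH ρr)) (Lc (x ⊗ₜ y)) =
      K1 ((TensorProduct.map LinearMap.id ρr) x ⊗ₜ
          (TensorProduct.map LinearMap.id (Coalgebra.comul (R:=k))) y) := by
  induction x using TensorProduct.induction_on with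
  | zero => simp
  | tmul u v =>
    induction y using TensorProduct.induction_on with
    | zero => simp
    | tmul p q => simp [rhoAH_apply]
    | add y1 y2 h1 h2 => simp only [tmul_add, map_add, h1, h2, add_tmul]
  | add x1 x2 h1 h2 => simp only [add_tmul, map_add, h1, h2, tmul_add]

lemma S5b (ρl : A →ₗ[k] H ⊗[k] A) (x : A ⊗[k] H) (y : H ⊗[k] H) :
    (TensorProduct.assoc k H (A ⊗[k] H) H)
        ((TensorProduct.map (lamAH ρl) LinearMap.id) (Rc (x ⊗ₜ y))) =
      K2 ((TensorProduct.map ρl LinearMap.id) x ⊗ₜ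
          (TensorProduct.map (Coalgebra.comul (R:=k)) LinearMap.id) y) := by
  induction x using TensorProduct.induction_on with
  | zero => simp
  | tmul v c =>
    induction y using TensorProduct.induction_on with
    | zero => simp
    | tmul p q => simp [lamAH_apply]
    | add y1 y2 h1 h2 => simp only [tmul_add, map_add, h1, h2, add_tmul]
  | add x1 x2 h1 h2 => simp only [add_tmul, map_add, h1, h2, tmul_add]

lemma S5c (X : (H ⊗[k] A) ⊗[k] H) (Y : (H ⊗[k] H) ⊗[k] H) :
    K1 ((TensorProduct.assoc k H A H) X ⊗ₜ (TensorProduct.assoc k H H H) Y) =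
      K2 (X ⊗ₜ Y) := by
  induction X using TensorProduct.induction_on with
  | zero => simp
  | tmul w c =>
    induction w using TensorProduct.induction_on with
    | zero => simp
    | tmul u v =>
      induction Y using TensorProduct.induction_on with
      | zero => simp
      | tmul z q =>
        induction z using TensorProduct.induction_on with
        | zero => simp
        | tmul p1 p2 => simp
        | add y1 y2 h1 h2 => simp only [tmul_add, map_add, h1, h2, add_tmul]
      | add y1 y2 h1 h2 => simp only [tmul_add, map_add, h1, h2, add_tmul]
    | add x1 x2 h1 h2 => simp only [add_tmul, map_add, h1, h2, tmul_add]
  | add x1 x2 h1 h2 => simp only [add_tmul, map_add, h1, h2, tmul_add]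

/-! ### Multiplicativity gadgets -/

lemma map_fst_fst {M N P Q : Type*} [AddCommMonoid M] [Module k M] [AddCommMonoid N]
    [Module k N] [AddCommMonoid P] [Module k P] [AddCommMonoid Q] [Module k Q]
    (f : N →ₗ[k] P) (g : M →ₗ[k] N) (t : M ⊗[k] Q) :
    (TensorProduct.map f LinearMap.id) ((TensorProduct.map g LinearMap.id) t) =
      (TensorProduct.map (f ∘ₗ g) LinearMap.id) t := by
  induction t using TensorProduct.induction_on with
  | zero => simp
  | tmul m q => simp
  | add u v hu hv => simp only [map_add, hu, hv]

lemma map_snd_snd {M N P Q : Type*} [AddCommMonoid M] [Module k M] [AddCommMonoid N]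
    [Module k N] [AddCommMonoid P] [Module k P] [AddCommMonoid Q] [Module k Q]
    (f : N →ₗ[k] P) (g : M →ₗ[k] N) (t : Q ⊗[k] M) :
    (TensorProduct.map LinearMap.id f) ((TensorProduct.map LinearMap.id g) t) =
      (TensorProduct.map LinearMap.id (f ∘ₗ g)) t := by
  induction t using TensorProduct.induction_on with
  | zero => simp
  | tmul m q => simp
  | add u v hu hv => simp only [map_add, hu, hv]

lemma map_split {M N P Q : Type*} [AddCommMonoid M] [Module k M] [AddCommMonoid N]
    [Module k N] [AddCommMonoid P] [Module k P] [AddCommMonoid Q] [Module k Q]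
    (f : M →ₗ[k] P) (g : N →ₗ[k] Q) (t : M ⊗[k] N) :
    (TensorProduct.map f g) t =
      (TensorProduct.map f LinearMap.id) ((TensorProduct.map LinearMap.id g) t) := by
  induction t using TensorProduct.induction_on with
  | zero => simp
  | tmul m q => simp
  | add u v hu hv => simp only [map_add, hu, hv]

/-- the core of the L-R-smash multiplication -/
def Mc : (A ⊗[k] H) ⊗[k] (A ⊗[k] H) →ₗ[k] A ⊗[k] H :=
  (TensorProduct.map (LinearMap.mul' k A)
      ((LinearMap.mul' k H) ∘ₗ (TensorProduct.comm k H H).toLinearMap))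
    ∘ₗ (tensorTensorTensorComm k A H A H).toLinearMap

@[simp] lemma Mc_tmul (v : A) (c : H) (v' : A) (c' : H) :
    Mc ((v ⊗ₜ c) ⊗ₜ (v' ⊗ₜ c')) = (v * v') ⊗ₜ[k] (c' * c) := by
  simp [Mc]

section Gadgets7

variable (la : H ⊗[k] A →ₗ[k] A) (ra : A ⊗[k] H →ₗ[k] A)
variable (ρl : A →ₗ[k] H ⊗[k] A) (ρr : A →ₗ[k] A ⊗[k] H)

lemma mu_apply (a a' : A) (h h' : H) :
    lrMulGen (LinearMap.mul' k A) (LinearMap.mul' k H)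
        (QsmashGen ra (Coalgebra.comul (R:=k))) (RsmashGen la (Coalgebra.comul (R:=k)))
        ((a ⊗ₜ h) ⊗ₜ (a' ⊗ₜ h')) =
      Mc (QsmashGen ra (Coalgebra.comul (R:=k)) (a ⊗ₜ h') ⊗ₜ
          RsmashGen la (Coalgebra.comul (R:=k)) (h ⊗ₜ a')) := by
  simp [lrMulGen, lrRearr, Mc]

lemma Q_apply (a : A) (h' : H) :
    QsmashGen ra (Coalgebra.comul (R:=k)) (a ⊗ₜ h') =
      (TensorProduct.map ra LinearMap.id)
        ((TensorProduct.assoc k A H H).symm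
          (a ⊗ₜ (TensorProduct.comm k H H (Coalgebra.comul (R:=k) h')))) := by
  simp [QsmashGen]

lemma R_apply (a' : A) (h : H) :
    RsmashGen la (Coalgebra.comul (R:=k)) (h ⊗ₜ a') =
      (TensorProduct.map la LinearMap.id) (ex23 (Coalgebra.comul (R:=k) h ⊗ₜ a')) := by
  simp [RsmashGen]

/-- the big context map for the left-coaction multiplicativity -/
def B7 : ((H ⊗[k] A) ⊗[k] (H ⊗[k] H)) ⊗[k] ((H ⊗[k] A) ⊗[k] (H ⊗[k] H)) →ₗ[k]
    H ⊗[k] (A ⊗[k] H) :=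
  Lc ∘ₗ (TensorProduct.map (tensMul (LinearMap.mul' k H) (LinearMap.mul' k A))
      (LinearMap.mul' k (H ⊗[k] H)))
    ∘ₗ (TensorProduct.map LinearMap.id
        (TensorProduct.comm k (H ⊗[k] H) (H ⊗[k] H)).toLinearMap)
    ∘ₗ (tensorTensorTensorComm k (H ⊗[k] A) (H ⊗[k] H) (H ⊗[k] A) (H ⊗[k] H)).toLinearMap

@[simp] lemma B7_tmul (x : H ⊗[k] A) (Z : H ⊗[k] H) (w : H ⊗[k] A) (Z' : H ⊗[k] H) :
    B7 ((x ⊗ₜ Z) ⊗ₜ (w ⊗ₜ Z')) =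
      Lc (tensMul (LinearMap.mul' k H) (LinearMap.mul' k A) (x ⊗ₜ w) ⊗ₜ (Z' * Z)) := by
  simp [B7]

/-- variant of `B7` with the Yetter-Drinfeld contraction already performed -/
def B7' : ((H ⊗[k] A) ⊗[k] (H ⊗[k] H)) ⊗[k] ((H ⊗[k] A) ⊗[k] H) →ₗ[k]
    H ⊗[k] (A ⊗[k] H) :=
  Lc ∘ₗ (TensorProduct.map (tensMul (LinearMap.mul' k H) (LinearMap.mul' k A))
      ((TensorProduct.map LinearMap.id
          ((LinearMap.mul' k H) ∘ₗ (TensorProduct.comm k H H).toLinearMap))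
        ∘ₗ (TensorProduct.assoc k H H H).toLinearMap))
    ∘ₗ (tensorTensorTensorComm k (H ⊗[k] A) (H ⊗[k] H) (H ⊗[k] A) H).toLinearMap

@[simp] lemma B7'_tmul (x : H ⊗[k] A) (z₁ z₂ : H) (w : H ⊗[k] A) (s : H) :
    B7' ((x ⊗ₜ (z₁ ⊗ₜ z₂)) ⊗ₜ (w ⊗ₜ s)) =
      Lc (tensMul (LinearMap.mul' k H) (LinearMap.mul' k A) (x ⊗ₜ w) ⊗ₜ
        (z₁ ⊗ₜ (s * z₂))) := by
  simp [B7']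

/-- the `C1` gadget : `x ⊗ (Z ⊗ g) ↦ (id ⊗ ra(-, g)) x ⊗ Z` -/
def C1 : (H ⊗[k] A) ⊗[k] ((H ⊗[k] H) ⊗[k] H) →ₗ[k] (H ⊗[k] A) ⊗[k] (H ⊗[k] H) :=
  (TensorProduct.map ((TensorProduct.map LinearMap.id ra)
      ∘ₗ (TensorProduct.assoc k H A H).toLinearMap) LinearMap.id)
    ∘ₗ (TensorProduct.assoc k (H ⊗[k] A) H (H ⊗[k] H)).symm.toLinearMap
    ∘ₗ (TensorProduct.map LinearMap.id (TensorProduct.comm k (H ⊗[k] H) H).toLinearMap)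

@[simp] lemma C1_tmul (u : H) (v : A) (Z : H ⊗[k] H) (g : H) :
    C1 ra ((u ⊗ₜ v) ⊗ₜ (Z ⊗ₜ g)) = (u ⊗ₜ ra (v ⊗ₜ g)) ⊗ₜ Z := by
  simp [C1]

/-- left-left Yetter-Drinfeld pattern, as a map of the two adjacent `H`-legs -/
def Ya (a' : A) : H ⊗[k] H →ₗ[k] H ⊗[k] A :=
  (TensorProduct.map (LinearMap.mul' k H) LinearMap.id) ∘ₗ ex23
    ∘ₗ (TensorProduct.map (ρl ∘ₗ la ∘ₗ (TensorProduct.mk k H A).flip a') LinearMap.id)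

/-- the right-hand side of the left-left Yetter-Drinfeld condition, as a map -/
def Za (x' : H ⊗[k] A) : H ⊗[k] H →ₗ[k] H ⊗[k] A :=
  (TensorProduct.map (LinearMap.mul' k H) la)
    ∘ₗ (tensorTensorTensorComm k H H H A).toLinearMap
    ∘ₗ ((TensorProduct.mk k (H ⊗[k] H) (H ⊗[k] A)).flip x')

@[simp] lemma Za_tmul (u' : H) (v' : A) (p s : H) :
    Za la (u' ⊗ₜ v') (p ⊗ₜ s) = (p * u') ⊗ₜ[k] la (s ⊗ₜ v') := by
  simp [Za]

end Gadgets7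

section Gadgets79
variable (la : H ⊗[k] A →ₗ[k] A) (ra : A ⊗[k] H →ₗ[k] A)
variable (ρl : A →ₗ[k] H ⊗[k] A) (ρr : A →ₗ[k] A ⊗[k] H)


@[simp] lemma C1_tmul' (x : H ⊗[k] A) (Z : H ⊗[k] H) (g : H) :
    C1 ra (x ⊗ₜ (Z ⊗ₜ g)) =
      ((TensorProduct.map LinearMap.id ra) ((TensorProduct.assoc k H A H) (x ⊗ₜ g))) ⊗ₜ Z := by
  simp [C1]

@[simp] lemma Ya_tmul (a' : A) (p s : H) :
    Ya la ρl a' (p ⊗ₜ s) =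
      (TensorProduct.map (LinearMap.mul' k H) LinearMap.id)
        (ex23 (ρl (la (p ⊗ₜ a')) ⊗ₜ s)) := by
  simp [Ya]

lemma T2 (c7 : ∀ x y : A, ρl (x * y) =
      tensMul (LinearMap.mul' k H) (LinearMap.mul' k A) (ρl x ⊗ₜ ρl y))
    (W₁ W₂ : A ⊗[k] H) :
    lamAH ρl (Mc (W₁ ⊗ₜ W₂)) =
      B7 ((TensorProduct.map ρl (Coalgebra.comul (R:=k))) W₁ ⊗ₜ
          (TensorProduct.map ρl (Coalgebra.comul (R:=k))) W₂) := by
  induction W₁ using TensorProduct.induction_on with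
  | zero => simp
  | tmul v c =>
    induction W₂ using TensorProduct.induction_on with
    | zero => simp
    | tmul v' c' => simp [lamAH_apply, c7]
    | add y1 y2 h1 h2 => simp only [tmul_add, map_add, h1, h2, add_tmul]
  | add x1 x2 h1 h2 => simp only [add_tmul, map_add, h1, h2, tmul_add]

lemma Tflip (x : H ⊗[k] A) (g : H) :
    (TensorProduct.map LinearMap.id ra) ((TensorProduct.assoc k H A H) (x ⊗ₜ g)) =
      (TensorProduct.map LinearMap.id (ra ∘ₗ (TensorProduct.mk k A H).flip g)) x := by
  induction x using TensorProduct.induction_on with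
  | zero => simp
  | tmul u v => simp
  | add x1 x2 h1 h2 => simp only [add_tmul, map_add, h1, h2]

lemma T3 (hLongrl : ∀ (m : A) (h : H), ρl (ra (m ⊗ₜ h)) =
      (TensorProduct.map LinearMap.id (ra ∘ₗ (TensorProduct.mk k A H).flip h)) (ρl m))
    (a : A) (Y' : H ⊗[k] H) :
    (TensorProduct.map ρl (Coalgebra.comul (R:=k)))
        ((TensorProduct.map ra LinearMap.id)
          ((TensorProduct.assoc k A H H).symm (a ⊗ₜ (TensorProduct.comm k H H Y')))) =
      C1 ra (ρl a ⊗ₜ (TensorProduct.map (Coalgebra.comul (R:=k)) LinearMap.id) Y') := by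
  induction Y' using TensorProduct.induction_on with
  | zero => simp
  | tmul q₁ q₂ =>
    simp only [comm_tmul, assoc_symm_tmul, map_tmul, LinearMap.id_coe, id_eq, C1_tmul']
    rw [hLongrl a q₂, Tflip]
  | add x1 x2 h1 h2 => simp only [tmul_add, map_add, h1, h2, add_tmul]

lemma T4 (a' : A) (Y : H ⊗[k] H) :
    (TensorProduct.map ρl (Coalgebra.comul (R:=k)))
        ((TensorProduct.map la LinearMap.id) (ex23 (Y ⊗ₜ a'))) =
      (TensorProduct.map (ρl ∘ₗ la ∘ₗ (TensorProduct.mk k H A).flip a')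
        (Coalgebra.comul (R:=k))) Y := by
  induction Y using TensorProduct.induction_on with
  | zero => simp
  | tmul p₁ p₂ => simp [ex23]
  | add x1 x2 h1 h2 => simp only [add_tmul, map_add, h1, h2]

lemma T5 (a' : A) (arg1 : (H ⊗[k] A) ⊗[k] (H ⊗[k] H)) (Y : H ⊗[k] H) :
    B7 (arg1 ⊗ₜ (TensorProduct.map (ρl ∘ₗ la ∘ₗ (TensorProduct.mk k H A).flip a')
        (Coalgebra.comul (R:=k))) Y) =
      B7' (arg1 ⊗ₜ (TensorProduct.map (Ya la ρl a') LinearMap.id)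
        ((TensorProduct.assoc k H H H).symm
          ((TensorProduct.map LinearMap.id (Coalgebra.comul (R:=k))) Y))) := by
  induction arg1 using TensorProduct.induction_on with
  | zero => simp
  | tmul x Z =>
    induction x using TensorProduct.induction_on with
    | zero => simp
    | tmul u v =>
      induction Z using TensorProduct.induction_on with
      | zero => simp
      | tmul z₁ z₂ =>
        induction Y using TensorProduct.induction_on with
        | zero => simp
        | tmul p₁ p₂ =>
          simp only [map_tmul, LinearMap.id_coe, id_eq, LinearMap.comp_apply,
            TensorProduct.mk_apply, LinearMap.flip_apply]
          generalize Coalgebra.comul (R:=k) p₂ = S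
          induction S using TensorProduct.induction_on with
          | zero => simp
          | tmul s₁ s₂ =>
            simp only [assoc_symm_tmul, map_tmul, LinearMap.id_coe, id_eq, Ya_tmul]
            generalize ρl (la (p₁ ⊗ₜ a')) = W
            induction W using TensorProduct.induction_on with
            | zero => simp
            | tmul w r => simp [ex23, tensMul, mul_assoc]
            | add x1 x2 h1 h2 => simp only [tmul_add, map_add, h1, h2, add_tmul]
          | add x1 x2 h1 h2 => simp only [tmul_add, map_add, h1, h2, add_tmul]
        | add x1 x2 h1 h2 => simp only [tmul_add, map_add, h1, h2, add_tmul]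
      | add x1 x2 h1 h2 => simp only [tmul_add, map_add, h1, h2, add_tmul]
    | add x1 x2 h1 h2 => simp only [add_tmul, map_add, h1, h2, tmul_add]
  | add x1 x2 h1 h2 => simp only [add_tmul, map_add, h1, h2, tmul_add]



@[simp] lemma Za_zero : Za (k:=k) (H:=H) (A:=A) la 0 = 0 := by
  ext Y; simp [Za]

lemma Za_add (x1 x2 : H ⊗[k] A) : Za la (x1 + x2) = Za la x1 + Za la x2 := by
  ext Y; simp [Za, tmul_add]

lemma YDmap (hYDll : ∀ (h : H) (m : A),
      (TensorProduct.map (LinearMap.mul' k H) LinearMap.id)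
          (ex23 ((TensorProduct.map (ρl ∘ₗ la ∘ₗ (TensorProduct.mk k H A).flip m)
            LinearMap.id) (Coalgebra.comul (R := k) h))) =
        (TensorProduct.map (LinearMap.mul' k H) la)
          ((tensorTensorTensorComm k H H H A)
            ((Coalgebra.comul (R := k) h) ⊗ₜ[k] (ρl m))))
    (a' : A) :
    (Ya la ρl a') ∘ₗ (Coalgebra.comul (R:=k)) =
      (Za la (ρl a')) ∘ₗ (Coalgebra.comul (R:=k)) := by
  ext g
  simp only [LinearMap.comp_apply, Ya, Za, TensorProduct.mk_apply, LinearMap.flip_apply]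
  exact hYDll g a'

lemma L7b (x x' : H ⊗[k] A) (y y' : H ⊗[k] H) :
    tensMul (LinearMap.mul' k H)
        (lrMulGen (LinearMap.mul' k A) (LinearMap.mul' k H)
          (QsmashGen ra (Coalgebra.comul (R:=k))) (RsmashGen la (Coalgebra.comul (R:=k))))
        (Lc (x ⊗ₜ y) ⊗ₜ Lc (x' ⊗ₜ y')) =
      B7' (C1 ra (x ⊗ₜ (TensorProduct.assoc k H H H).symm
            ((TensorProduct.map LinearMap.id (Coalgebra.comul (R:=k))) y')) ⊗ₜ
          (TensorProduct.map (Za la x') LinearMap.id)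
            ((TensorProduct.assoc k H H H).symm
              ((TensorProduct.map LinearMap.id (Coalgebra.comul (R:=k))) y))) := by
  induction x using TensorProduct.induction_on with
  | zero => simp
  | tmul u v =>
    induction x' using TensorProduct.induction_on with
    | zero => simp
    | tmul u' v' =>
      induction y using TensorProduct.induction_on with
      | zero => simp
      | tmul p₁ p₂ =>
        induction y' using TensorProduct.induction_on with
        | zero => simp
        | tmul q₁ q₂ =>
          simp only [Lc_tmul, map_tmul, LinearMap.id_coe, id_eq, tensMul,
            LinearMap.comp_apply, LinearEquiv.coe_coe, tensorTensorTensorComm_tmul,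
            LinearMap.mul'_apply]
          rw [mu_apply la ra]
          rw [Q_apply ra, R_apply la]
          generalize Coalgebra.comul (R:=k) p₂ = S
          generalize Coalgebra.comul (R:=k) q₂ = T
          induction S using TensorProduct.induction_on with
          | zero => simp
          | tmul s₁ s₂ =>
            induction T using TensorProduct.induction_on with
            | zero => simp
            | tmul g₁ g₂ =>
              simp [ex23, tensMul, mul_assoc]
            | add x1 x2 h1 h2 => simp only [tmul_add, map_add, h1, h2, add_tmul]
          | add x1 x2 h1 h2 => simp only [tmul_add, map_add, h1, h2, add_tmul]
        | add x1 x2 h1 h2 => simp only [tmul_add, map_add, h1, h2, add_tmul]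
      | add x1 x2 h1 h2 => simp only [tmul_add, map_add, h1, h2, add_tmul]
    | add x1 x2 h1 h2 =>
      simp only [tmul_add, map_add, h1, h2, add_tmul, Za_add, TensorProduct.map_add_left,
        LinearMap.add_apply]
  | add x1 x2 h1 h2 => simp only [add_tmul, map_add, h1, h2, tmul_add]



/-- the big context map for the right-coaction multiplicativity -/
def B9 : ((A ⊗[k] H) ⊗[k] (H ⊗[k] H)) ⊗[k] ((A ⊗[k] H) ⊗[k] (H ⊗[k] H)) →ₗ[k]
    (A ⊗[k] H) ⊗[k] H :=
  Rc ∘ₗ (TensorProduct.map (tensMul (LinearMap.mul' k A) (LinearMap.mul' k H))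
      (LinearMap.mul' k (H ⊗[k] H)))
    ∘ₗ (TensorProduct.map LinearMap.id
        (TensorProduct.comm k (H ⊗[k] H) (H ⊗[k] H)).toLinearMap)
    ∘ₗ (tensorTensorTensorComm k (A ⊗[k] H) (H ⊗[k] H) (A ⊗[k] H) (H ⊗[k] H)).toLinearMap

@[simp] lemma B9_tmul (x : A ⊗[k] H) (Z : H ⊗[k] H) (w : A ⊗[k] H) (Z' : H ⊗[k] H) :
    B9 ((x ⊗ₜ Z) ⊗ₜ (w ⊗ₜ Z')) =
      Rc (tensMul (LinearMap.mul' k A) (LinearMap.mul' k H) (x ⊗ₜ w) ⊗ₜ (Z' * Z)) := by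
  simp [B9]

/-- variant of `B9` with the Yetter-Drinfeld contraction already performed -/
def B9' : (H ⊗[k] (A ⊗[k] H)) ⊗[k] ((A ⊗[k] H) ⊗[k] (H ⊗[k] H)) →ₗ[k]
    (A ⊗[k] H) ⊗[k] H :=
  Rc ∘ₗ (TensorProduct.map (tensMul (LinearMap.mul' k A) (LinearMap.mul' k H))
      ((TensorProduct.map ((LinearMap.mul' k H) ∘ₗ (TensorProduct.comm k H H).toLinearMap)
          LinearMap.id)
        ∘ₗ (TensorProduct.assoc k H H H).symm.toLinearMap))
    ∘ₗ (tensorTensorTensorComm k (A ⊗[k] H) H (A ⊗[k] H) (H ⊗[k] H)).toLinearMap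
    ∘ₗ (TensorProduct.map (TensorProduct.comm k H (A ⊗[k] H)).toLinearMap LinearMap.id)

@[simp] lemma B9'_tmul (t₁ : H) (W : A ⊗[k] H) (V : A ⊗[k] H) (s₁ s₂ : H) :
    B9' ((t₁ ⊗ₜ W) ⊗ₜ (V ⊗ₜ (s₁ ⊗ₜ s₂))) =
      Rc (tensMul (LinearMap.mul' k A) (LinearMap.mul' k H) (W ⊗ₜ V) ⊗ₜ
        ((s₁ * t₁) ⊗ₜ s₂)) := by
  simp [B9']

lemma T2₉ (c9 : ∀ x y : A, ρr (x * y) =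
      tensMul (LinearMap.mul' k A) (LinearMap.mul' k H) (ρr x ⊗ₜ ρr y))
    (W₁ W₂ : A ⊗[k] H) :
    rhoAH ρr (Mc (W₁ ⊗ₜ W₂)) =
      B9 ((TensorProduct.map ρr (Coalgebra.comul (R:=k))) W₁ ⊗ₜ
          (TensorProduct.map ρr (Coalgebra.comul (R:=k))) W₂) := by
  induction W₁ using TensorProduct.induction_on with
  | zero => simp
  | tmul v c =>
    induction W₂ using TensorProduct.induction_on with
    | zero => simp
    | tmul v' c' => simp [rhoAH_apply, c9]
    | add y1 y2 h1 h2 => simp only [tmul_add, map_add, h1, h2, add_tmul]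
  | add x1 x2 h1 h2 => simp only [add_tmul, map_add, h1, h2, tmul_add]

lemma T3₉ (a : A) (W : H ⊗[k] H) :
    (TensorProduct.map ρr (Coalgebra.comul (R:=k)))
        ((TensorProduct.map ra LinearMap.id)
          ((TensorProduct.assoc k A H H).symm (a ⊗ₜ W))) =
      (TensorProduct.map (ρr ∘ₗ ra ∘ₗ (TensorProduct.mk k A H a))
        (Coalgebra.comul (R:=k))) W := by
  induction W using TensorProduct.induction_on with
  | zero => simp
  | tmul w₁ w₂ => simp
  | add x1 x2 h1 h2 => simp only [tmul_add, map_add, h1, h2]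

lemma T4₉ (a' : A) (Y : H ⊗[k] H) :
    (TensorProduct.map ρr (Coalgebra.comul (R:=k)))
        ((TensorProduct.map la LinearMap.id) (ex23 (Y ⊗ₜ a'))) =
      (TensorProduct.map (ρr ∘ₗ la ∘ₗ (TensorProduct.mk k H A).flip a')
        (Coalgebra.comul (R:=k))) Y := by
  induction Y using TensorProduct.induction_on with
  | zero => simp
  | tmul p₁ p₂ => simp [ex23]
  | add x1 x2 h1 h2 => simp only [add_tmul, map_add, h1, h2]

/-- right-right Yetter-Drinfeld pattern, as a map of the two adjacent `H`-legs -/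
def Ya2 (a : A) : H ⊗[k] H →ₗ[k] A ⊗[k] H :=
  (TensorProduct.comm k H A).toLinearMap
    ∘ₗ (TensorProduct.map (LinearMap.mul' k H) LinearMap.id)
    ∘ₗ (TensorProduct.assoc k H H A).symm.toLinearMap
    ∘ₗ (TensorProduct.map LinearMap.id
        ((TensorProduct.comm k A H).toLinearMap ∘ₗ ρr ∘ₗ ra ∘ₗ (TensorProduct.mk k A H a)))

@[simp] lemma Ya2_tmul (a : A) (t s : H) :
    Ya2 ra ρr a (t ⊗ₜ s) =
      (TensorProduct.comm k H A)
        ((TensorProduct.map (LinearMap.mul' k H) LinearMap.id)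
          ((TensorProduct.assoc k H H A).symm
            (t ⊗ₜ (TensorProduct.comm k A H (ρr (ra (a ⊗ₜ s))))))) := by
  simp [Ya2]

/-- the right-hand side of the right-right Yetter-Drinfeld condition, as a map -/
def Za2 (x : A ⊗[k] H) : H ⊗[k] H →ₗ[k] A ⊗[k] H :=
  (TensorProduct.map ra (LinearMap.mul' k H))
    ∘ₗ (tensorTensorTensorComm k A H H H).toLinearMap
    ∘ₗ (TensorProduct.mk k (A ⊗[k] H) (H ⊗[k] H) x)

@[simp] lemma Za2_tmul (α₀ : A) (α₁ : H) (g q : H) :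
    Za2 ra (α₀ ⊗ₜ α₁) (g ⊗ₜ q) = ra (α₀ ⊗ₜ g) ⊗ₜ[k] (α₁ * q) := by
  simp [Za2]

@[simp] lemma Za2_zero : Za2 (k:=k) (H:=H) (A:=A) ra 0 = 0 := by
  ext Y; simp [Za2]

lemma Za2_add (x1 x2 : A ⊗[k] H) : Za2 ra (x1 + x2) = Za2 ra x1 + Za2 ra x2 := by
  ext Y; simp [Za2, add_tmul]

lemma YD2map (hYDrr : ∀ (h : H) (m : A),
      (TensorProduct.comm k H A)
          ((TensorProduct.map (LinearMap.mul' k H) LinearMap.id)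
            ((TensorProduct.assoc k H H A).symm
              ((TensorProduct.map LinearMap.id
                  ((TensorProduct.comm k A H).toLinearMap ∘ₗ ρr ∘ₗ ra
                    ∘ₗ (TensorProduct.mk k A H) m))
                (Coalgebra.comul (R := k) h)))) =
        (TensorProduct.map ra (LinearMap.mul' k H))
          ((tensorTensorTensorComm k A H H H)
            ((ρr m) ⊗ₜ[k] (Coalgebra.comul (R := k) h))))
    (a : A) :
    (Ya2 ra ρr a) ∘ₗ (Coalgebra.comul (R:=k)) =
      (Za2 ra (ρr a)) ∘ₗ (Coalgebra.comul (R:=k)) := by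
  ext g
  simp only [LinearMap.comp_apply, Ya2, Za2, TensorProduct.mk_apply, LinearMap.flip_apply,
    LinearEquiv.coe_coe]
  exact hYDrr g a

lemma T5₉ (a : A) (arg2 : (A ⊗[k] H) ⊗[k] (H ⊗[k] H)) (Y' : H ⊗[k] H) :
    B9 ((TensorProduct.map (ρr ∘ₗ ra ∘ₗ (TensorProduct.mk k A H a))
          (Coalgebra.comul (R:=k))) (TensorProduct.comm k H H Y') ⊗ₜ arg2) =
      B9' ((TensorProduct.map LinearMap.id (Ya2 ra ρr a))
          ((TensorProduct.assoc k H H H)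
            ((TensorProduct.map (Coalgebra.comul (R:=k)) LinearMap.id) Y')) ⊗ₜ arg2) := by
  induction arg2 using TensorProduct.induction_on with
  | zero => simp
  | tmul V S =>
    induction V using TensorProduct.induction_on with
    | zero => simp
    | tmul x₂ c₂ =>
      induction S using TensorProduct.induction_on with
      | zero => simp
      | tmul s₁ s₂ =>
        induction Y' using TensorProduct.induction_on with
        | zero => simp
        | tmul q₁ q₂ =>
          simp only [comm_tmul, map_tmul, LinearMap.id_coe, id_eq, LinearMap.comp_apply,
            TensorProduct.mk_apply]
          generalize Coalgebra.comul (R:=k) q₁ = T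
          induction T using TensorProduct.induction_on with
          | zero => simp
          | tmul t₁ t₂ =>
            simp only [assoc_tmul, map_tmul, LinearMap.id_coe, id_eq, Ya2_tmul]
            generalize ρr (ra (a ⊗ₜ q₂)) = Wq
            induction Wq using TensorProduct.induction_on with
            | zero => simp
            | tmul α γ => simp [tensMul, mul_assoc]
            | add x1 x2 h1 h2 => simp only [tmul_add, map_add, h1, h2, add_tmul]
          | add x1 x2 h1 h2 => simp only [tmul_add, map_add, h1, h2, add_tmul]
        | add x1 x2 h1 h2 => simp only [tmul_add, map_add, h1, h2, add_tmul]
      | add x1 x2 h1 h2 => simp only [tmul_add, map_add, h1, h2, add_tmul]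
    | add x1 x2 h1 h2 => simp only [add_tmul, map_add, h1, h2, tmul_add]
  | add x1 x2 h1 h2 => simp only [tmul_add, map_add, h1, h2, add_tmul]

/-- `p ↦ (la ⊗ id)(assoc⁻¹(p ⊗ x'))` -/
def Gm (x' : A ⊗[k] H) : H →ₗ[k] A ⊗[k] H :=
  (TensorProduct.map la LinearMap.id) ∘ₗ (TensorProduct.assoc k H A H).symm.toLinearMap
    ∘ₗ ((TensorProduct.mk k H (A ⊗[k] H)).flip x')

@[simp] lemma Gm_tmul (w : A) (r : H) (s : H) :
    Gm la (w ⊗ₜ r) s = la (s ⊗ₜ w) ⊗ₜ[k] r := by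
  simp [Gm]

@[simp] lemma Gm_zero : Gm (k:=k) (H:=H) (A:=A) la 0 = 0 := by
  ext s; simp [Gm]

lemma Gm_add (x1 x2 : A ⊗[k] H) : Gm la (x1 + x2) = Gm la x1 + Gm la x2 := by
  ext s; simp [Gm, tmul_add]

lemma Gm_eq (hLonglr : ∀ (h : H) (m : A), ρr (la (h ⊗ₜ m)) =
      (TensorProduct.map (la ∘ₗ (TensorProduct.mk k H A) h) LinearMap.id) (ρr m))
    (a' : A) :
    ρr ∘ₗ la ∘ₗ (TensorProduct.mk k H A).flip a' = Gm la (ρr a') := by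
  ext p
  simp only [LinearMap.comp_apply, LinearMap.flip_apply, TensorProduct.mk_apply]
  rw [hLonglr p a']
  generalize ρr a' = x
  induction x using TensorProduct.induction_on with
  | zero => simp
  | tmul w r => simp
  | add x1 x2 h1 h2 => simp only [map_add, h1, h2, Gm_add, LinearMap.add_apply]

lemma L9b (xr xr' : A ⊗[k] H) (y y' : H ⊗[k] H) :
    tensMul (lrMulGen (LinearMap.mul' k A) (LinearMap.mul' k H)
          (QsmashGen ra (Coalgebra.comul (R:=k))) (RsmashGen la (Coalgebra.comul (R:=k))))
        (LinearMap.mul' k H)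
        (Rc (xr ⊗ₜ y) ⊗ₜ Rc (xr' ⊗ₜ y')) =
      B9' ((TensorProduct.map LinearMap.id (Za2 ra xr))
            ((TensorProduct.assoc k H H H)
              ((TensorProduct.map (Coalgebra.comul (R:=k)) LinearMap.id) y')) ⊗ₜ
          (TensorProduct.map (Gm la xr') LinearMap.id)
            ((TensorProduct.assoc k H H H)
              ((TensorProduct.map (Coalgebra.comul (R:=k)) LinearMap.id) y))) := by
  induction xr using TensorProduct.induction_on with
  | zero => simp
  | tmul α₀ α₁ =>
    induction xr' using TensorProduct.induction_on with
    | zero => simp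
    | tmul w r =>
      induction y using TensorProduct.induction_on with
      | zero => simp
      | tmul p₁ p₂ =>
        induction y' using TensorProduct.induction_on with
        | zero => simp
        | tmul q₁ q₂ =>
          simp only [Rc_tmul, map_tmul, LinearMap.id_coe, id_eq, tensMul,
            LinearMap.comp_apply, LinearEquiv.coe_coe, tensorTensorTensorComm_tmul,
            LinearMap.mul'_apply]
          rw [mu_apply la ra]
          rw [Q_apply ra, R_apply la]
          generalize Coalgebra.comul (R:=k) p₁ = Tp
          generalize Coalgebra.comul (R:=k) q₁ = Tq
          induction Tp using TensorProduct.induction_on with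
          | zero => simp
          | tmul s₁ s₂ =>
            induction Tq using TensorProduct.induction_on with
            | zero => simp
            | tmul g₁ g₂ => simp [ex23, tensMul, mul_assoc]
            | add x1 x2 h1 h2 => simp only [tmul_add, map_add, h1, h2, add_tmul]
          | add x1 x2 h1 h2 => simp only [tmul_add, map_add, h1, h2, add_tmul]
        | add x1 x2 h1 h2 => simp only [tmul_add, map_add, h1, h2, add_tmul]
      | add x1 x2 h1 h2 => simp only [tmul_add, map_add, h1, h2, add_tmul]
    | add x1 x2 h1 h2 =>
      simp only [tmul_add, map_add, h1, h2, add_tmul, Gm_add, TensorProduct.map_add_left,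
        LinearMap.add_apply]
  | add x1 x2 h1 h2 =>
    simp only [add_tmul, map_add, h1, h2, tmul_add, Za2_add, TensorProduct.map_add_right,
      LinearMap.add_apply]


end Gadgets79

end
end Aux
end LR

namespace LR

/-- If `A` is an algebra in `ℒℛ(H)`, then the L-R-smash product
`A ♮ H` is an `H`-bicomodule algebra with left coaction
`λ(a ♮ h) = a^{(-1)}h₁ ⊗ (a^{(0)} ♮ h₂)` and right coaction
`ρ(a ♮ h) = (a^{<0>} ♮ h₁) ⊗ h₂a^{<1>}`. -/
theorem lr_smash_product_bicomodule_algebra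
    {k : Type*} [Field k] {H A : Type*}
    [Ring H] [Bialgebra k H] [Ring A] [Algebra k A]
    (laA : H ⊗[k] A →ₗ[k] A) (raA : A ⊗[k] H →ₗ[k] A)
    (ρlA : A →ₗ[k] H ⊗[k] A) (ρrA : A →ₗ[k] A ⊗[k] H)
    (hA : IsYDLAlgebra laA raA ρlA ρrA) :
    IsBicomoduleAlgebra
      (lrMulGen (LinearMap.mul' k A) (LinearMap.mul' k H)
        (QsmashGen raA (Coalgebra.comul (R := k)))
        (RsmashGen laA (Coalgebra.comul (R := k))))
      ((1 : A) ⊗ₜ[k] (1 : H)) (lamAH ρlA) (rhoAH ρrA) := by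
  obtain ⟨hbm, hbc, hYDll, hLonglr, hYDrr, hLongrl⟩ := hA
  obtain ⟨c1, c2, c3, c4, c5, c6, c7, c8, c9⟩ := hbc
  clear hbm
  refine ⟨?_, ?_, ?_, ?_, ?_, ?_, ?_, ?_, ?_⟩
  · -- counit law for the left coaction
    intro m
    induction m using TensorProduct.induction_on with
    | zero => simp
    | tmul a h => rw [lamAH_apply, counit_Lc, c1 a, counit_rid]
    | add u v hu hv => simp only [map_add, hu, hv]
  · -- left coassociativity
    intro m
    induction m using TensorProduct.induction_on with
    | zero => simp
    | tmul a h => rw [lamAH_apply, S1L, c2 a, coassocL h, S2L]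
    | add u v hu hv => simp only [map_add, hu, hv]
  · -- counit law for the right coaction
    intro m
    induction m using TensorProduct.induction_on with
    | zero => simp
    | tmul a h => rw [rhoAH_apply, counit_Rc, c3 a, counit_lid]
    | add u v hu hv => simp only [map_add, hu, hv]
  · -- right coassociativity
    intro m
    induction m using TensorProduct.induction_on with
    | zero => simp
    | tmul a h => rw [rhoAH_apply, S1R, c4 a, coassocR h, S2R]
    | add u v hu hv => simp only [map_add, hu, hv]
  · -- bicomodule compatibility
    intro m
    induction m using TensorProduct.induction_on with
    | zero => simp
    | tmul a h =>
      rw [lamAH_apply, rhoAH_apply, S5a, c5 a, coassocR h, S5c, ← S5b]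
    | add u v hu hv => simp only [map_add, hu, hv]
  · -- unit of left coaction
    rw [lamAH_apply, c6, Bialgebra.comul_one, Algebra.TensorProduct.one_def, Lc_tmul, one_mul]
  · -- multiplicativity of the left coaction
    have c7' : ∀ x y : A, ρlA (x * y) =
        tensMul (LinearMap.mul' k H) (LinearMap.mul' k A) (ρlA x ⊗ₜ ρlA y) := by
      intro x y; simpa using c7 x y
    intro x y
    induction x using TensorProduct.induction_on with
    | zero => simp
    | tmul a h =>
      induction y using TensorProduct.induction_on with
      | zero => simp
      | tmul a' h' =>
        rw [mu_apply laA raA, T2 ρlA c7', Q_apply raA,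
          T3 raA ρlA hLongrl a (Coalgebra.comul h'), R_apply laA,
          T4 laA ρlA a' (Coalgebra.comul h), T5 laA ρlA a',
          ← coassocL h, map_fst_fst, YDmap laA ρlA hYDll a', ← map_fst_fst,
          coassocL h, coassocL h', lamAH_apply ρlA a h, lamAH_apply ρlA a' h',
          L7b laA raA]
      | add y1 y2 h1 h2 => simp only [tmul_add, map_add, h1, h2]
    | add x1 x2 h1 h2 => simp only [add_tmul, map_add, h1, h2, tmul_add]
  · -- unit of right coaction
    rw [rhoAH_apply, c8, Bialgebra.comul_one, Algebra.TensorProduct.one_def, Rc_tmul, one_mul]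
  · -- multiplicativity of the right coaction
    have c9' : ∀ x y : A, ρrA (x * y) =
        tensMul (LinearMap.mul' k A) (LinearMap.mul' k H) (ρrA x ⊗ₜ ρrA y) := by
      intro x y; simpa using c9 x y
    intro x y
    induction x using TensorProduct.induction_on with
    | zero => simp
    | tmul a h =>
      induction y using TensorProduct.induction_on with
      | zero => simp
      | tmul a' h' =>
        rw [mu_apply laA raA, T2₉ ρrA c9', Q_apply raA,
          T3₉ raA ρrA a ((TensorProduct.comm k H H) (Coalgebra.comul h')), R_apply laA,
          T4₉ laA ρrA a' (Coalgebra.comul h), Gm_eq laA ρrA hLonglr a',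
          T5₉ raA ρrA a,
          ← coassocR h', map_snd_snd, YD2map raA ρrA hYDrr a, ← map_snd_snd, coassocR h',
          map_split (Gm laA (ρrA a')) _ (Coalgebra.comul h), coassocR h,
          rhoAH_apply ρrA a h, rhoAH_apply ρrA a' h', L9b laA raA]
      | add y1 y2 h1 h2 => simp only [tmul_add, map_add, h1, h2]
    | add x1 x2 h1 h2 => simp only [add_tmul, map_add, h1, h2, tmul_add]


end LR
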